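/- Let f : ℝ² → ℝ be smooth with ∇f ∈ L^p(ℝ²) for some 2 < p < ∞, where ℝ² is regarded as an exterior domain. Then |f(x)| / |x|^{(p-2)/p} → 0 uniformly as |x| → ∞; in particular there exists R > 0 such that |f(x)| ≤ (1 + |x|)^{(p-2)/p} for all |x| > R. -/

import Mathlib

open MeasureTheory Metric Set Filter Topology

namespace GaldiAux

local notation "E2" => EuclideanSpace ℝ (Fin 2)

noncomputable def VV : ℝ := (volume (closedBall (0:E2) 1)).toReal

lemma finrank_E2 : Module.finrank ℝ (EuclideanSpace ℝ (Fin 2)) = 2 := by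
  simp [finrank_euclideanSpace_fin]

lemma volU_lt_top : volume (closedBall (0:E2) 1) < ⊤ :=
  (isCompact_closedBall _ _).measure_lt_top

lemma VV_pos : 0 < VV :=
  ENNReal.toReal_pos (measure_closedBall_pos volume _ one_pos).ne' volU_lt_top.ne

lemma vol_cb (c : E2) {s : ℝ} (hs : 0 ≤ s) :
    volume (closedBall c s) = ENNReal.ofReal (s ^ 2) * volume (closedBall (0:E2) 1) := by
  rw [Measure.addHaar_closedBall' volume c hs, finrank_E2]

lemma vol_cb_toReal (c : E2) {s : ℝ} (hs : 0 ≤ s) :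
    (volume (closedBall c s)).toReal = s ^ 2 * VV := by
  rw [vol_cb c hs, ENNReal.toReal_mul, ENNReal.toReal_ofReal (by positivity)]; rfl

lemma vol_cb_lt_top (c : E2) (s : ℝ) : volume (closedBall c s) < ⊤ :=
  (isCompact_closedBall _ _).measure_lt_top

/-- change of variables -/
lemma cv (h : E2 → ℝ) (c : E2) {s : ℝ} (hs : 0 < s) :
    ∫ w in closedBall (0:E2) 1, h (c + s • w) = (s ^ 2)⁻¹ * ∫ z in closedBall c s, h z := by
  have h1 : ∀ w : E2, (closedBall (0:E2) 1).indicator (fun w => h (c + s • w)) w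
      = (fun u => (closedBall c s).indicator h (c + u)) (s • w) := by
    intro w
    by_cases hw : w ∈ closedBall (0:E2) 1
    · rw [Set.indicator_of_mem hw]
      show _ = (closedBall c s).indicator h (c + s • w)
      rw [Set.indicator_of_mem]
      simp only [mem_closedBall, dist_zero_right] at hw
      simp only [mem_closedBall, dist_eq_norm, add_sub_cancel_left, norm_smul,
        Real.norm_eq_abs, abs_of_pos hs]
      nlinarith [norm_nonneg w]
    · rw [Set.indicator_of_notMem hw]
      show _ = (closedBall c s).indicator h (c + s • w)
      rw [Set.indicator_of_notMem]
      simp only [mem_closedBall, dist_zero_right, not_le] at hw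
      simp only [mem_closedBall, dist_eq_norm, add_sub_cancel_left, norm_smul,
        Real.norm_eq_abs, abs_of_pos hs, not_le]
      nlinarith
  calc ∫ w in closedBall (0:E2) 1, h (c + s • w)
      = ∫ w, (closedBall (0:E2) 1).indicator (fun w => h (c + s • w)) w :=
        (integral_indicator measurableSet_closedBall).symm
    _ = ∫ w, (fun u => (closedBall c s).indicator h (c + u)) (s • w) := by
        exact integral_congr_ae (Eventually.of_forall h1)
    _ = |((s ^ Module.finrank ℝ (EuclideanSpace ℝ (Fin 2))):ℝ)⁻¹| •
          ∫ u, (closedBall c s).indicator h (c + u) := by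
        exact Measure.integral_comp_smul volume (fun u => (closedBall c s).indicator h (c + u)) s
    _ = (s ^ 2)⁻¹ * ∫ u, (closedBall c s).indicator h u := by
        rw [integral_add_left_eq_self (μ := volume) ((closedBall c s).indicator h) c]
        rw [finrank_E2, smul_eq_mul, abs_of_pos (by positivity)]
    _ = (s ^ 2)⁻¹ * ∫ z in closedBall c s, h z := by
        rw [integral_indicator measurableSet_closedBall]

/-- Hölder on a finite-measure set against the constant 1. -/
lemma hoelder {p : ℝ} (hp : 1 < p) {g : E2 → ℝ} (hg : MemLp g (ENNReal.ofReal p) volume)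
    (hg0 : ∀ z, 0 ≤ g z) (T : Set E2) (hTfin : volume T ≠ ⊤) :
    ∫ z in T, g z ≤ (∫ z in T, g z ^ p) ^ (1/p) * ((volume T).toReal) ^ (1 - 1/p) := by
  have hpq := Real.HolderConjugate.conjExponent hp
  haveI : IsFiniteMeasure (volume.restrict T) :=
    ⟨by rw [Measure.restrict_apply_univ]; exact lt_top_iff_ne_top.2 hTfin⟩
  have h1 : MemLp (fun _ : E2 => (1:ℝ)) (ENNReal.ofReal (Real.conjExponent p))
      (volume.restrict T) := memLp_const 1
  have key := integral_mul_le_Lp_mul_Lq_of_nonneg (μ := volume.restrict T) hpq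
      (Eventually.of_forall hg0) (Eventually.of_forall fun _ => zero_le_one)
      (hg.restrict T) h1
  simp only [mul_one, Real.one_rpow, integral_const, Measure.restrict_apply_univ,
    smul_eq_mul] at key
  have hq : 1 / Real.conjExponent p = 1 - 1/p := by
    have := hpq.inv_add_inv_eq_one
    rw [one_div, one_div]
    linarith
  rwa [hq, measureReal_restrict_apply_univ] at key


lemma curve_hasDerivAt (f : E2 → ℝ) (hf : ContDiff ℝ (⊤ : ℕ∞) f) (c₀ v : E2) (σ₀ σ₁ : ℝ)
    (w : E2) (τ : ℝ) :
    HasDerivAt (fun τ => f (c₀ + τ • v + (σ₀ + τ * σ₁) • w))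
      ((fderiv ℝ f (c₀ + τ • v + (σ₀ + τ * σ₁) • w)) (v + σ₁ • w)) τ := by
  have hcurve : HasDerivAt (fun τ : ℝ => c₀ + τ • v + (σ₀ + τ * σ₁) • w) (v + σ₁ • w) τ := by
    have h1 : HasDerivAt (fun τ : ℝ => c₀ + τ • v) v τ := by
      simpa using ((hasDerivAt_id τ).smul_const v).const_add c₀
    have h2 : HasDerivAt (fun τ : ℝ => (σ₀ + τ * σ₁) • w) (σ₁ • w) τ := by
      have h3 : HasDerivAt (fun τ : ℝ => σ₀ + τ * σ₁) σ₁ τ := by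
        simpa using ((hasDerivAt_id τ).mul_const σ₁).const_add σ₀
      exact h3.smul_const w
    exact h1.add h2
  exact ((hf.differentiable (by simp) _).hasFDerivAt).comp_hasDerivAt τ hcurve

lemma diff_avg (f : E2 → ℝ) (hf : ContDiff ℝ (⊤ : ℕ∞) f) (c₀ v : E2) (σ₀ σ₁ : ℝ) (τ₀ : ℝ) :
    HasDerivAt (fun τ => ∫ w in closedBall (0:E2) 1, f (c₀ + τ • v + (σ₀ + τ * σ₁) • w))
      (∫ w in closedBall (0:E2) 1,
        (fderiv ℝ f (c₀ + τ₀ • v + (σ₀ + τ₀ * σ₁) • w)) (v + σ₁ • w)) τ₀ := by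
  haveI : IsFiniteMeasure (volume.restrict (closedBall (0:E2) 1)) :=
    ⟨by rw [Measure.restrict_apply_univ]; exact (isCompact_closedBall _ _).measure_lt_top⟩
  set ρ : ℝ := ‖c₀‖ + (|τ₀| + 1) * ‖v‖ + (|σ₀| + (|τ₀| + 1) * |σ₁|) with hρ
  obtain ⟨C, hC⟩ := (isCompact_closedBall (0:E2) ρ).exists_bound_of_continuousOn
    ((hf.continuous_fderiv (by simp)).norm.continuousOn)
  have hmem : ∀ τ : ℝ, τ ∈ ball τ₀ 1 → ∀ w : E2, w ∈ closedBall (0:E2) 1 →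
      (c₀ + τ • v + (σ₀ + τ * σ₁) • w) ∈ closedBall (0:E2) ρ := by
    intro τ hτ w hw
    simp only [mem_ball, Real.dist_eq] at hτ
    simp only [mem_closedBall, dist_zero_right] at hw ⊢
    have hτ' : |τ| ≤ |τ₀| + 1 := by
      have := abs_sub_abs_le_abs_sub τ τ₀
      linarith
    calc ‖c₀ + τ • v + (σ₀ + τ * σ₁) • w‖
        ≤ ‖c₀ + τ • v‖ + ‖(σ₀ + τ * σ₁) • w‖ := norm_add_le _ _
      _ ≤ ‖c₀‖ + ‖τ • v‖ + ‖(σ₀ + τ * σ₁) • w‖ := by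
          have := norm_add_le c₀ (τ • v); linarith
      _ = ‖c₀‖ + |τ| * ‖v‖ + |σ₀ + τ * σ₁| * ‖w‖ := by
          rw [norm_smul, norm_smul, Real.norm_eq_abs, Real.norm_eq_abs]
      _ ≤ ρ := by
          have h1 : |σ₀ + τ * σ₁| ≤ |σ₀| + (|τ₀| + 1) * |σ₁| := by
            calc |σ₀ + τ * σ₁| ≤ |σ₀| + |τ * σ₁| := abs_add_le _ _
              _ = |σ₀| + |τ| * |σ₁| := by rw [abs_mul]
              _ ≤ |σ₀| + (|τ₀| + 1) * |σ₁| := by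
                  have := abs_nonneg σ₁
                  nlinarith
          have h2 : |τ| * ‖v‖ ≤ (|τ₀| + 1) * ‖v‖ := by
            have := norm_nonneg v; nlinarith
          have h3 : |σ₀ + τ * σ₁| * ‖w‖ ≤ |σ₀| + (|τ₀| + 1) * |σ₁| := by
            have h4 : (0:ℝ) ≤ |σ₀ + τ * σ₁| := abs_nonneg _
            nlinarith
          rw [hρ]; linarith
  have key := hasDerivAt_integral_of_dominated_loc_of_deriv_le (μ := volume.restrict (closedBall (0:E2) 1))
    (F := fun τ w => f (c₀ + τ • v + (σ₀ + τ * σ₁) • w))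
    (F' := fun τ w => (fderiv ℝ f (c₀ + τ • v + (σ₀ + τ * σ₁) • w)) (v + σ₁ • w))
    (x₀ := τ₀) (bound := fun _ => C * (‖v‖ + |σ₁|)) (s := ball τ₀ 1) (ball_mem_nhds τ₀ one_pos)
    ?_ ?_ ?_ ?_ ?_ ?_
  · exact key.2
  · refine Eventually.of_forall fun τ => ?_
    exact (hf.continuous.comp
      (continuous_const.add (continuous_const_smul _))).aestronglyMeasurable
  · exact ((hf.continuous.comp (continuous_const.add
      (continuous_const_smul _))).continuousOn).integrableOn_compact (isCompact_closedBall _ _)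
  · apply Continuous.aestronglyMeasurable
    apply Continuous.clm_apply
    · exact (hf.continuous_fderiv (by simp)).comp (continuous_const.add (continuous_const_smul _))
    · exact continuous_const.add (continuous_const_smul _)
  · rw [ae_restrict_iff' measurableSet_closedBall]
    refine Eventually.of_forall fun w hw => ?_
    intro τ hτ
    have hpt := hmem τ hτ w hw
    have hb := hC _ hpt
    simp only [mem_closedBall, dist_zero_right] at hw
    calc ‖(fderiv ℝ f (c₀ + τ • v + (σ₀ + τ * σ₁) • w)) (v + σ₁ • w)‖
        ≤ ‖fderiv ℝ f (c₀ + τ • v + (σ₀ + τ * σ₁) • w)‖ * ‖v + σ₁ • w‖ :=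
          ContinuousLinearMap.le_opNorm _ _
      _ ≤ C * (‖v‖ + |σ₁|) := by
          have h5 : ‖v + σ₁ • w‖ ≤ ‖v‖ + |σ₁| := by
            calc ‖v + σ₁ • w‖ ≤ ‖v‖ + ‖σ₁ • w‖ := norm_add_le _ _
              _ = ‖v‖ + |σ₁| * ‖w‖ := by rw [norm_smul, Real.norm_eq_abs]
              _ ≤ ‖v‖ + |σ₁| := by nlinarith [abs_nonneg σ₁]
          have h6 : ‖fderiv ℝ f (c₀ + τ • v + (σ₀ + τ * σ₁) • w)‖ ≤ C := by
            have := hb; rwa [Real.norm_eq_abs, abs_of_nonneg (norm_nonneg _)] at this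
          have h7 : (0:ℝ) ≤ ‖v + σ₁ • w‖ := norm_nonneg _
          have h8 : (0:ℝ) ≤ ‖fderiv ℝ f (c₀ + τ • v + (σ₀ + τ * σ₁) • w)‖ := norm_nonneg _
          nlinarith
  · exact integrable_const _
  · rw [ae_restrict_iff' measurableSet_closedBall]
    refine Eventually.of_forall fun w _ => fun τ _ => curve_hasDerivAt f hf c₀ v σ₀ σ₁ w τ

section C

variable {p : ℝ} {f : EuclideanSpace ℝ (Fin 2) → ℝ}

/-- local L^p norm of the gradient over a ball -/
noncomputable def NN (f : E2 → ℝ) (p : ℝ) (c : E2) (s : ℝ) : ℝ :=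
  (∫ z in closedBall c s, ‖fderiv ℝ f z‖ ^ p) ^ (1/p)

lemma G_integrable (hp : 2 < p)
    (hgrad : MemLp (fun x => fderiv ℝ f x) (ENNReal.ofReal p) volume) :
    Integrable (fun z : E2 => ‖fderiv ℝ f z‖ ^ p) volume := by
  have := hgrad.integrable_norm_rpow (by simp; linarith) (by simp)
  rwa [ENNReal.toReal_ofReal (by linarith)] at this

lemma NN_nonneg (f : E2 → ℝ) (p : ℝ) (c : E2) (s : ℝ) : 0 ≤ NN f p c s :=
  Real.rpow_nonneg
    (integral_nonneg fun z => Real.rpow_nonneg (norm_nonneg _) p) _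

lemma NN_le (hp : 2 < p)
    (hgrad : MemLp (fun x => fderiv ℝ f x) (ENNReal.ofReal p) volume)
    {c : E2} {s : ℝ} {T : Set E2} (hsub : closedBall c s ⊆ T) :
    NN f p c s ≤ (∫ z in T, ‖fderiv ℝ f z‖ ^ p) ^ (1/p) := by
  refine Real.rpow_le_rpow
    (integral_nonneg fun z => Real.rpow_nonneg (norm_nonneg _) p) ?_ (by positivity)
  exact setIntegral_mono_set ((G_integrable hp hgrad).integrableOn)
    (Eventually.of_forall fun z => Real.rpow_nonneg (norm_nonneg _) p)
    (HasSubset.Subset.eventuallyLE hsub)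

lemma rpow_sq_helper {σ : ℝ} (hσ : 0 < σ) (e : ℝ) :
    (σ ^ 2)⁻¹ * (σ ^ 2) ^ e = σ ^ (-2 + 2 * e) := by
  rw [← Real.rpow_natCast σ 2, ← Real.rpow_neg hσ.le, ← Real.rpow_mul hσ.le,
    ← Real.rpow_add hσ]
  norm_num

/-- CV + Hölder: bound for the average of the gradient over a scaled ball -/
lemma int_g_ball (hp : 2 < p) (hf : ContDiff ℝ (⊤ : ℕ∞) f)
    (hgrad : MemLp (fun x => fderiv ℝ f x) (ENNReal.ofReal p) volume)
    (c : E2) {σ : ℝ} (hσ : 0 < σ) :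
    ∫ w in closedBall (0:E2) 1, ‖fderiv ℝ f (c + σ • w)‖ ≤
      VV ^ (1 - 1/p) * NN f p c σ * σ ^ (-(2/p)) := by
  rw [cv (fun z => ‖fderiv ℝ f z‖) c hσ]
  have h := hoelder (by linarith : 1 < p) hgrad.norm (fun z => norm_nonneg _)
    (closedBall c σ) (vol_cb_lt_top c σ).ne
  rw [vol_cb_toReal c hσ.le] at h
  have h2 : (σ ^ 2)⁻¹ * ((∫ z in closedBall c σ, ‖fderiv ℝ f z‖ ^ p) ^ (1/p) *
      (σ ^ 2 * VV) ^ (1 - 1/p)) = VV ^ (1 - 1/p) * NN f p c σ * σ ^ (-(2/p)) := by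
    rw [Real.mul_rpow (by positivity) VV_pos.le]
    have h3 := rpow_sq_helper hσ (1 - 1/p)
    have h4 : -2 + 2 * (1 - 1/p) = -(2/p) := by ring
    rw [h4] at h3
    rw [NN, ← h3]
    ring
  rw [← h2]
  exact mul_le_mul_of_nonneg_left h (by positivity)

lemma integrableOn_U_comp (hf : ContDiff ℝ (⊤ : ℕ∞) f) (c : E2) (σ : ℝ) :
    IntegrableOn (fun w : E2 => f (c + σ • w)) (closedBall (0:E2) 1) volume :=
  ((hf.continuous.comp (continuous_const.add
    (continuous_const_smul _))).continuousOn).integrableOn_compact (isCompact_closedBall _ _)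

/-- derivative of the averaged dilate in the radius -/
lemma radial_deriv (hf : ContDiff ℝ (⊤ : ℕ∞) f) (c : E2) (σ₀ : ℝ) :
    HasDerivAt (fun σ => ∫ w in closedBall (0:E2) 1, f (c + σ • w))
      (∫ w in closedBall (0:E2) 1, (fderiv ℝ f (c + σ₀ • w)) w) σ₀ := by
  have h := diff_avg f hf c 0 0 1 σ₀
  simp only [smul_zero, add_zero, zero_add, mul_one, zero_smul, one_smul] at h
  exact h

/-- bound for the radial derivative -/
lemma radial_deriv_bound (hp : 2 < p) (hf : ContDiff ℝ (⊤ : ℕ∞) f)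
    (hgrad : MemLp (fun x => fderiv ℝ f x) (ENNReal.ofReal p) volume)
    (c : E2) {σ : ℝ} (hσ : 0 < σ) :
    ‖∫ w in closedBall (0:E2) 1, (fderiv ℝ f (c + σ • w)) w‖ ≤
      VV ^ (1 - 1/p) * NN f p c σ * σ ^ (-(2/p)) := by
  refine le_trans (norm_integral_le_integral_norm _) ?_
  refine le_trans ?_ (int_g_ball hp hf hgrad c hσ)
  refine setIntegral_mono_on ?_ ?_ measurableSet_closedBall ?_
  · apply ContinuousOn.integrableOn_compact (isCompact_closedBall _ _)
    apply Continuous.continuousOn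
    apply Continuous.norm
    apply Continuous.clm_apply
    · exact (hf.continuous_fderiv (by simp)).comp (continuous_const.add
        (continuous_const_smul _))
    · exact continuous_id
  · exact (((hf.continuous_fderiv (by simp)).comp (continuous_const.add
      (continuous_const_smul _))).norm).continuousOn.integrableOn_compact (isCompact_closedBall _ _)
  · intro w hw
    simp only [mem_closedBall, dist_zero_right] at hw
    calc ‖(fderiv ℝ f (c + σ • w)) w‖ ≤ ‖fderiv ℝ f (c + σ • w)‖ * ‖w‖ :=
          ContinuousLinearMap.le_opNorm _ _
      _ ≤ ‖fderiv ℝ f (c + σ • w)‖ := by nlinarith [norm_nonneg (fderiv ℝ f (c + σ • w))]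

lemma alpha_pos (hp : 2 < p) : 0 < 1 - 2/p := by
  have hp0 : (0:ℝ) < p := by linarith
  have : 2/p < 1 := (div_lt_one hp0).2 hp
  linarith

lemma r_lt_one (hp : 2 < p) : (1/2:ℝ) ^ (1 - 2/p) < 1 :=
  Real.rpow_lt_one (by norm_num) (by norm_num) (alpha_pos hp)

lemma r_pos (hp : 2 < p) : (0:ℝ) < (1/2:ℝ) ^ (1 - 2/p) :=
  Real.rpow_pos_of_pos (by norm_num) _

lemma pow_rpow_comm {x : ℝ} (hx : 0 ≤ x) (k : ℕ) (a : ℝ) :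
    ((x ^ k : ℝ)) ^ a = (x ^ a) ^ k := by
  rw [← Real.rpow_natCast x k, ← Real.rpow_mul hx, mul_comm, Real.rpow_mul hx,
    Real.rpow_natCast]

set_option maxHeartbeats 1000000 in
lemma radial_est (hp : 2 < p) (hf : ContDiff ℝ (⊤ : ℕ∞) f)
    (hgrad : MemLp (fun x => fderiv ℝ f x) (ENNReal.ofReal p) volume)
    (c : E2) {s : ℝ} (hs : 0 < s) :
    |VV * f c - ∫ w in closedBall (0:E2) 1, f (c + s • w)| ≤
      VV ^ (1 - 1/p) * NN f p c s * s ^ (1 - 2/p) *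
        ((1/2:ℝ) ^ (1 - 2/p) / (1 - (1/2:ℝ) ^ (1 - 2/p))) := by
  set α := 1 - 2/p with hα
  set e := 1 - 1/p with he
  set r := (1/2:ℝ) ^ α with hrdef
  have hα0 : 0 < α := alpha_pos hp
  have hr0 : 0 < r := r_pos hp
  have hr1 : r < 1 := r_lt_one hp
  set X := VV ^ e * NN f p c s * s ^ α with hX
  have hX0 : 0 ≤ X := by
    have := NN_nonneg f p c s
    have := Real.rpow_nonneg VV_pos.le e
    have := Real.rpow_nonneg hs.le α
    positivity
  set b : ℕ → ℝ := fun k => ∫ w in closedBall (0:E2) 1, f (c + (s * (1/2)^k) • w) with hb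
  -- the dyadic hop estimate
  have hop : ∀ k : ℕ, |b k - b (k+1)| ≤ X * r ^ (k+1) := by
    intro k
    set sk := s * (1/2:ℝ)^k with hsk
    set sk1 := s * (1/2:ℝ)^(k+1) with hsk1
    have hsk0 : 0 < sk := by positivity
    have hsk10 : 0 < sk1 := by positivity
    have hsub : sk - sk1 = sk1 := by rw [hsk, hsk1]; ring
    have hle : sk1 ≤ sk := by nlinarith
    have key := Convex.norm_image_sub_le_of_norm_hasDerivWithin_le
      (f := fun σ => ∫ w in closedBall (0:E2) 1, f (c + σ • w))
      (f' := fun σ => ∫ w in closedBall (0:E2) 1, (fderiv ℝ f (c + σ • w)) w)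
      (s := Icc sk1 sk) (C := VV ^ e * NN f p c s * sk1 ^ (-(2/p)))
      (fun σ _ => (radial_deriv hf c σ).hasDerivWithinAt)
      ?_ (convex_Icc _ _) (left_mem_Icc.2 hle) (right_mem_Icc.2 hle)
    · have hval : (VV ^ e * NN f p c s * sk1 ^ (-(2/p))) * ‖sk - sk1‖ = X * r ^ (k+1) := by
        rw [hsub, Real.norm_eq_abs, abs_of_pos hsk10]
        have h1 : sk1 ^ (-(2/p)) * sk1 = sk1 ^ α := by
          nth_rewrite 2 [← Real.rpow_one sk1]
          rw [← Real.rpow_add hsk10]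
          congr 1
          rw [hα]; ring
        have h2 : sk1 ^ α = s ^ α * r ^ (k+1) := by
          rw [hsk1, Real.mul_rpow hs.le (by positivity), hrdef,
            pow_rpow_comm (by norm_num : (0:ℝ) ≤ 1/2)]
        rw [hX]
        calc VV ^ e * NN f p c s * sk1 ^ (-(2/p)) * sk1
            = VV ^ e * NN f p c s * (sk1 ^ (-(2/p)) * sk1) := by ring
          _ = VV ^ e * NN f p c s * (s ^ α * r ^ (k+1)) := by rw [h1, h2]
          _ = VV ^ e * NN f p c s * s ^ α * r ^ (k+1) := by ring
      calc |b k - b (k+1)| = ‖(fun σ => ∫ w in closedBall (0:E2) 1, f (c + σ • w)) sk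
            - (fun σ => ∫ w in closedBall (0:E2) 1, f (c + σ • w)) sk1‖ := by
            rw [Real.norm_eq_abs]
        _ ≤ (VV ^ e * NN f p c s * sk1 ^ (-(2/p))) * ‖sk - sk1‖ := key
        _ = X * r ^ (k+1) := hval
    · intro σ hσ
      obtain ⟨hσ1, hσ2⟩ := hσ
      have hσ0 : 0 < σ := lt_of_lt_of_le hsk10 hσ1
      refine le_trans (radial_deriv_bound hp hf hgrad c hσ0) ?_
      have hNN : NN f p c σ ≤ NN f p c s := by
        have hhalf : (1/2:ℝ)^k ≤ 1 := pow_le_one₀ (by norm_num) (by norm_num)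
        have hσs : σ ≤ s := le_trans hσ2 (by nlinarith)
        have := NN_le hp hgrad (closedBall_subset_closedBall hσs :
          closedBall c σ ⊆ closedBall c s)
        rw [NN]
        exact this
      have hpow : σ ^ (-(2/p)) ≤ sk1 ^ (-(2/p)) := by
        refine Real.rpow_le_rpow_of_nonpos hsk10 hσ1 ?_
        have : 0 < 2/p := by positivity
        linarith
      have h1 := Real.rpow_nonneg VV_pos.le e
      have h2 := NN_nonneg f p c σ
      have h3 := NN_nonneg f p c s
      have h4 := Real.rpow_nonneg hσ0.le (-(2/p))
      have h5 := Real.rpow_nonneg hsk10.le (-(2/p))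
      rw [← he]
      exact mul_le_mul (mul_le_mul_of_nonneg_left hNN h1) hpow h4 (mul_nonneg h1 h3)
  -- iterate
  have ind : ∀ k : ℕ, |b 0 - b k| ≤ X * (r/(1-r)) * (1 - r^k) := by
    intro k
    induction k with
    | zero => simp
    | succ k ih =>
      have heq : (r/(1-r)) * (1-r^k) + r^(k+1) = (r/(1-r)) * (1-r^(k+1)) := by
        have h1r : (1:ℝ) - r ≠ 0 := by linarith
        field_simp
        ring
      calc |b 0 - b (k+1)| ≤ |b 0 - b k| + |b k - b (k+1)| := abs_sub_le _ _ _
        _ ≤ X * (r/(1-r)) * (1 - r^k) + X * r^(k+1) := add_le_add ih (hop k)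
        _ = X * (r/(1-r)) * (1 - r^(k+1)) := by linear_combination X * heq
  -- limit of b
  have hblim : Tendsto b atTop (𝓝 (VV * f c)) := by
    rw [Metric.tendsto_atTop]
    intro ε hε
    set ε' := ε / (VV + 1) with hε'def
    have hε' : 0 < ε' := by have := VV_pos; positivity
    obtain ⟨δ, hδ0, hδ⟩ := Metric.continuous_iff.1 hf.continuous c ε' hε'
    have htend : Tendsto (fun k : ℕ => s * (1/2:ℝ)^k) atTop (𝓝 0) := by
      have := (tendsto_pow_atTop_nhds_zero_of_lt_one (by norm_num : (0:ℝ) ≤ 1/2)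
        (by norm_num : (1/2:ℝ) < 1)).const_mul s
      simpa using this
    obtain ⟨N, hN⟩ := (htend.eventually_lt_const hδ0).exists
    refine ⟨N, fun k hk => ?_⟩
    set sk := s * (1/2:ℝ)^k with hsk
    have hsk0 : 0 < sk := by positivity
    have hskδ : sk < δ := by
      have : (1/2:ℝ)^k ≤ (1/2:ℝ)^N :=
        pow_le_pow_of_le_one (by norm_num) (by norm_num) hk
      have : sk ≤ s * (1/2:ℝ)^N := by rw [hsk]; nlinarith
      linarith
    have hconst : VV * f c = ∫ _ in closedBall (0:E2) 1, f c := by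
      rw [setIntegral_const, smul_eq_mul]; rfl
    have hsubint : b k - VV * f c
        = ∫ w in closedBall (0:E2) 1, (f (c + sk • w) - f c) := by
      rw [hconst, hb]
      exact (integral_sub (integrableOn_U_comp hf c sk)
        (integrableOn_const volU_lt_top.ne)).symm
    have hbound : ∀ w ∈ closedBall (0:E2) 1, ‖f (c + sk • w) - f c‖ ≤ ε' := by
      intro w hw
      simp only [mem_closedBall, dist_zero_right] at hw
      have hdist : dist (c + sk • w) c < δ := by
        rw [dist_eq_norm, add_sub_cancel_left, norm_smul, Real.norm_eq_abs,
          abs_of_pos hsk0]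
        nlinarith
      have := hδ _ hdist
      rw [Real.dist_eq] at this
      rw [Real.norm_eq_abs]
      linarith
    have hnorm := norm_setIntegral_le_of_norm_le_const volU_lt_top hbound
    rw [Real.dist_eq, abs_sub_comm, ← abs_sub_comm, hsubint]
    rw [← Real.norm_eq_abs]
    calc ‖∫ w in closedBall (0:E2) 1, (f (c + sk • w) - f c)‖
        ≤ ε' * (volume (closedBall (0:E2) 1)).toReal := hnorm
      _ = ε' * VV := rfl
      _ < ε := by
          have hVV := VV_pos
          have : ε' * (VV + 1) = ε := by
            rw [hε'def]; field_simp
          nlinarith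
  -- conclude
  have hbd : ∀ k, |b 0 - b k| ≤ X * (r/(1-r)) := by
    intro k
    refine (ind k).trans ?_
    have h1 : 0 ≤ r/(1-r) := div_nonneg hr0.le (by linarith)
    have h2 : (0:ℝ) ≤ r^k := by positivity
    nlinarith [mul_nonneg (mul_nonneg hX0 h1) h2]
  have h2 : Tendsto (fun k => |b 0 - b k|) atTop (𝓝 |b 0 - VV * f c|) :=
    (tendsto_const_nhds.sub hblim).abs
  have hfin : |b 0 - VV * f c| ≤ X * (r/(1-r)) :=
    le_of_tendsto h2 (Eventually.of_forall hbd)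
  have hb0 : b 0 = ∫ w in closedBall (0:E2) 1, f (c + s • w) := by
    rw [hb]
    simp only [pow_zero, mul_one]
  rw [abs_sub_comm] at hfin
  rw [← hb0]
  calc |VV * f c - b 0| ≤ X * (r/(1-r)) := hfin
    _ = VV ^ e * NN f p c s * s ^ α * (r / (1 - r)) := by rw [hX]

lemma shift_deriv (hf : ContDiff ℝ (⊤ : ℕ∞) f) (x y : E2) (d : ℝ) (τ₀ : ℝ) :
    HasDerivAt (fun τ => ∫ w in closedBall (0:E2) 1, f (x + τ • (y - x) + d • w))
      (∫ w in closedBall (0:E2) 1, (fderiv ℝ f (x + τ₀ • (y - x) + d • w)) (y - x)) τ₀ := by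
  have h := diff_avg f hf x (y - x) d 0 τ₀
  simpa using h

lemma shift_est (hp : 2 < p) (hf : ContDiff ℝ (⊤ : ℕ∞) f)
    (hgrad : MemLp (fun x => fderiv ℝ f x) (ENNReal.ofReal p) volume)
    (x y : E2) {d : ℝ} (hd : 0 < d) (hdist : dist x y ≤ d) :
    |(∫ w in closedBall (0:E2) 1, f (y + d • w)) -
        ∫ w in closedBall (0:E2) 1, f (x + d • w)| ≤
      VV ^ (1 - 1/p) * NN f p x (2*d) * d ^ (1 - 2/p) := by
  set C := ‖y - x‖ * (VV ^ (1 - 1/p) * NN f p x (2*d) * d ^ (-(2/p))) with hC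
  have key := Convex.norm_image_sub_le_of_norm_hasDerivWithin_le
    (f := fun τ => ∫ w in closedBall (0:E2) 1, f (x + τ • (y - x) + d • w))
    (f' := fun τ => ∫ w in closedBall (0:E2) 1,
      (fderiv ℝ f (x + τ • (y - x) + d • w)) (y - x))
    (s := Icc (0:ℝ) 1) (C := C)
    (fun τ _ => (shift_deriv hf x y d τ).hasDerivWithinAt)
    ?_ (convex_Icc _ _) (left_mem_Icc.2 zero_le_one) (right_mem_Icc.2 zero_le_one)
  · have hψ1 : ∀ w : E2, x + (1:ℝ) • (y - x) + d • w = y + d • w := by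
      intro w; rw [one_smul]; abel
    have hψ0 : ∀ w : E2, x + (0:ℝ) • (y - x) + d • w = x + d • w := by
      intro w; rw [zero_smul]; abel
    simp only [hψ1, hψ0] at key
    have hone : C * ‖(1:ℝ) - 0‖ = C := by norm_num
    rw [hone] at key
    rw [← Real.norm_eq_abs]
    refine le_trans key ?_
    have hyx : ‖y - x‖ ≤ d := by rw [← dist_eq_norm, dist_comm]; exact hdist
    have h1 : d ^ (-(2/p)) * d = d ^ (1 - 2/p) := by
      nth_rewrite 2 [← Real.rpow_one d]
      rw [← Real.rpow_add hd]
      congr 1; ring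
    have h2 := Real.rpow_nonneg VV_pos.le (1 - 1/p)
    have h3 := NN_nonneg f p x (2*d)
    have h4 := Real.rpow_nonneg hd.le (-(2/p))
    calc C ≤ d * (VV ^ (1 - 1/p) * NN f p x (2*d) * d ^ (-(2/p))) := by
          rw [hC]
          exact mul_le_mul_of_nonneg_right hyx (by positivity)
      _ = VV ^ (1 - 1/p) * NN f p x (2*d) * (d ^ (-(2/p)) * d) := by ring
      _ = VV ^ (1 - 1/p) * NN f p x (2*d) * d ^ (1 - 2/p) := by rw [h1]
  · intro τ hτ
    obtain ⟨hτ0, hτ1⟩ := hτ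
    have hcont1 : Continuous fun w : E2 =>
        (fderiv ℝ f (x + τ • (y - x) + d • w)) (y - x) := by
      apply Continuous.clm_apply
      · exact (hf.continuous_fderiv (by simp)).comp (continuous_const.add
          (continuous_const_smul _))
      · exact continuous_const
    have hcont2 : Continuous fun w : E2 => ‖fderiv ℝ f (x + τ • (y - x) + d • w)‖ :=
      ((hf.continuous_fderiv (by simp)).comp (continuous_const.add
        (continuous_const_smul _))).norm
    have step1 : ‖∫ w in closedBall (0:E2) 1,
        (fderiv ℝ f (x + τ • (y - x) + d • w)) (y - x)‖ ≤
        ∫ w in closedBall (0:E2) 1,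
          ‖fderiv ℝ f (x + τ • (y - x) + d • w)‖ * ‖y - x‖ := by
      refine le_trans (norm_integral_le_integral_norm _) ?_
      refine setIntegral_mono_on
        (hcont1.norm.continuousOn.integrableOn_compact (isCompact_closedBall _ _))
        ((hcont2.mul continuous_const).continuousOn.integrableOn_compact
          (isCompact_closedBall _ _)) measurableSet_closedBall ?_
      intro w _
      exact ContinuousLinearMap.le_opNorm _ _
    have step2 : ∫ w in closedBall (0:E2) 1,
        ‖fderiv ℝ f (x + τ • (y - x) + d • w)‖ * ‖y - x‖
        = (∫ w in closedBall (0:E2) 1, ‖fderiv ℝ f ((x + τ • (y - x)) + d • w)‖) * ‖y - x‖ := by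
      rw [← integral_mul_const]
    have step3 := int_g_ball hp hf hgrad (x + τ • (y - x)) hd
    have hNN : NN f p (x + τ • (y - x)) d ≤ NN f p x (2*d) := by
      have hsub : closedBall (x + τ • (y - x)) d ⊆ closedBall x (2*d) := by
        apply closedBall_subset_closedBall'
        have : dist (x + τ • (y - x)) x ≤ d := by
          rw [dist_eq_norm, add_sub_cancel_left, norm_smul, Real.norm_eq_abs,
            abs_of_nonneg hτ0]
          have hyx : ‖y - x‖ ≤ d := by rw [← dist_eq_norm, dist_comm]; exact hdist
          nlinarith [norm_nonneg (y - x)]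
        linarith
      have := NN_le hp hgrad hsub
      rw [NN]
      exact this
    have hyx : ‖y - x‖ ≤ d := by rw [← dist_eq_norm, dist_comm]; exact hdist
    have h2 := Real.rpow_nonneg VV_pos.le (1 - 1/p)
    have h3 := NN_nonneg f p (x + τ • (y - x)) d
    have h4 := Real.rpow_nonneg hd.le (-(2/p))
    have h5 := NN_nonneg f p x (2*d)
    calc ‖∫ w in closedBall (0:E2) 1,
          (fderiv ℝ f (x + τ • (y - x) + d • w)) (y - x)‖
        ≤ (∫ w in closedBall (0:E2) 1,
            ‖fderiv ℝ f ((x + τ • (y - x)) + d • w)‖) * ‖y - x‖ := by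
          rw [← step2]; exact step1
      _ ≤ (VV ^ (1 - 1/p) * NN f p (x + τ • (y - x)) d * d ^ (-(2/p))) * ‖y - x‖ := by
          refine mul_le_mul_of_nonneg_right step3 (norm_nonneg _)
      _ ≤ C := by
          rw [hC]
          have hint : VV ^ (1 - 1/p) * NN f p (x + τ • (y - x)) d * d ^ (-(2/p))
              ≤ VV ^ (1 - 1/p) * NN f p x (2*d) * d ^ (-(2/p)) :=
            mul_le_mul_of_nonneg_right (mul_le_mul_of_nonneg_left hNN h2) h4
          calc (VV ^ (1 - 1/p) * NN f p (x + τ • (y - x)) d * d ^ (-(2/p))) * ‖y - x‖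
              ≤ (VV ^ (1 - 1/p) * NN f p x (2*d) * d ^ (-(2/p))) * ‖y - x‖ :=
                mul_le_mul_of_nonneg_right hint (norm_nonneg _)
            _ = ‖y - x‖ * (VV ^ (1 - 1/p) * NN f p x (2*d) * d ^ (-(2/p))) := mul_comm _ _

/-- the constant in the Morrey-type pair estimate -/
noncomputable def kap (p : ℝ) : ℝ :=
  (1/2:ℝ) ^ (1 - 2/p) / (1 - (1/2:ℝ) ^ (1 - 2/p))

noncomputable def CP (p : ℝ) : ℝ := VV ^ (1 - 1/p) * (2 * kap p + 1) / VV

lemma kap_pos (hp : 2 < p) : 0 < kap p := by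
  have h1 := r_pos hp
  have h2 := r_lt_one hp
  rw [kap]
  exact div_pos h1 (by linarith)

lemma CP_pos (hp : 2 < p) : 0 < CP p := by
  have h1 := kap_pos hp
  have h2 := Real.rpow_pos_of_pos VV_pos (1 - 1/p)
  have h3 := VV_pos
  rw [CP]
  positivity

lemma pair_est (hp : 2 < p) (hf : ContDiff ℝ (⊤ : ℕ∞) f)
    (hgrad : MemLp (fun x => fderiv ℝ f x) (ENNReal.ofReal p) volume)
    (x y : E2) {d : ℝ} (hd : 0 < d) (hdist : dist x y ≤ d) :
    |f x - f y| ≤ CP p * NN f p x (2*d) * d ^ (1 - 2/p) := by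
  set NN2 := NN f p x (2*d) with hNN2
  have t1 := radial_est hp hf hgrad x hd
  have t2 := radial_est hp hf hgrad y hd
  have t3 := shift_est hp hf hgrad x y hd hdist
  have hN1 : NN f p x d ≤ NN2 := by
    have := NN_le hp hgrad (closedBall_subset_closedBall (by linarith) :
      closedBall x d ⊆ closedBall x (2*d))
    rw [hNN2, NN]
    exact this
  have hN2 : NN f p y d ≤ NN2 := by
    have hsub : closedBall y d ⊆ closedBall x (2*d) := by
      apply closedBall_subset_closedBall'
      rw [dist_comm]
      linarith
    have := NN_le hp hgrad hsub
    rw [hNN2, NN]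
    exact this
  have hdα := Real.rpow_nonneg hd.le (1 - 2/p)
  have hVe := Real.rpow_nonneg VV_pos.le (1 - 1/p)
  have hκ := (kap_pos hp).le
  have hN20 : 0 ≤ NN2 := NN_nonneg f p x (2*d)
  have hNx0 : 0 ≤ NN f p x d := NN_nonneg f p x d
  have hNy0 : 0 ≤ NN f p y d := NN_nonneg f p y d
  have hsum : VV * |f x - f y| ≤
      VV ^ (1 - 1/p) * NN2 * d ^ (1 - 2/p) * (2 * kap p + 1) := by
    have habs : VV * |f x - f y| = |VV * f x - VV * f y| := by
      rw [← mul_sub, abs_mul, abs_of_pos VV_pos]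
    rw [habs]
    have tri : |VV * f x - VV * f y| ≤
        |VV * f x - ∫ w in closedBall (0:E2) 1, f (x + d • w)| +
        |(∫ w in closedBall (0:E2) 1, f (y + d • w)) -
          ∫ w in closedBall (0:E2) 1, f (x + d • w)| +
        |VV * f y - ∫ w in closedBall (0:E2) 1, f (y + d • w)| := by
      set ax := ∫ w in closedBall (0:E2) 1, f (x + d • w)
      set ay := ∫ w in closedBall (0:E2) 1, f (y + d • w)
      have : VV * f x - VV * f y = (VV * f x - ax) - (ay - ax) - (VV * f y - ay) := by
        ring
      rw [this]
      calc |VV * f x - ax - (ay - ax) - (VV * f y - ay)|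
          ≤ |VV * f x - ax - (ay - ax)| + |VV * f y - ay| := abs_sub _ _
        _ ≤ |VV * f x - ax| + |ay - ax| + |VV * f y - ay| := by
            have := abs_sub (VV * f x - ax) (ay - ax)
            linarith
    refine le_trans tri ?_
    have b1 : |VV * f x - ∫ w in closedBall (0:E2) 1, f (x + d • w)| ≤
        VV ^ (1 - 1/p) * NN2 * d ^ (1 - 2/p) * kap p := by
      refine le_trans t1 ?_
      have hκ2 := (kap_pos hp).le
      rw [kap] at hκ2
      rw [kap]
      exact mul_le_mul_of_nonneg_right (mul_le_mul_of_nonneg_right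
        (mul_le_mul_of_nonneg_left hN1 hVe) hdα) hκ2
    have b2 : |VV * f y - ∫ w in closedBall (0:E2) 1, f (y + d • w)| ≤
        VV ^ (1 - 1/p) * NN2 * d ^ (1 - 2/p) * kap p := by
      refine le_trans t2 ?_
      have hκ2 := (kap_pos hp).le
      rw [kap] at hκ2
      rw [kap]
      exact mul_le_mul_of_nonneg_right (mul_le_mul_of_nonneg_right
        (mul_le_mul_of_nonneg_left hN2 hVe) hdα) hκ2
    have b3 : |(∫ w in closedBall (0:E2) 1, f (y + d • w)) -
        ∫ w in closedBall (0:E2) 1, f (x + d • w)| ≤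
        VV ^ (1 - 1/p) * NN2 * d ^ (1 - 2/p) := t3
    nlinarith
  rw [CP]
  rw [div_mul_eq_mul_div, div_mul_eq_mul_div, le_div_iff₀ VV_pos]
  nlinarith

end C

section D

variable {p : ℝ} {f : EuclideanSpace ℝ (Fin 2) → ℝ}

lemma tail_small (hp : 2 < p)
    (hgrad : MemLp (fun x => fderiv ℝ f x) (ENNReal.ofReal p) volume)
    {δ : ℝ} (hδ : 0 < δ) :
    ∃ S : ℝ, 1 ≤ S ∧ ∀ (c : E2) (s : ℝ),
      closedBall c s ⊆ (closedBall (0:E2) S)ᶜ → NN f p c s ≤ δ := by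
  have hG := G_integrable hp hgrad
  have hδp : 0 < δ ^ p := Real.rpow_pos_of_pos hδ p
  have hmono : Monotone (fun n : ℕ => closedBall (0:E2) (n:ℝ)) := fun m n hmn =>
    closedBall_subset_closedBall (by exact_mod_cast hmn)
  have hunion : ⋃ n : ℕ, closedBall (0:E2) (n:ℝ) = univ := by
    ext x
    simp only [mem_iUnion, mem_closedBall, dist_zero_right, mem_univ, iff_true]
    exact exists_nat_ge ‖x‖
  have htendsto := tendsto_setIntegral_of_monotone
    (fun n : ℕ => measurableSet_closedBall) hmono
    (by rw [hunion]; exact hG.integrableOn)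
  rw [hunion, setIntegral_univ] at htendsto
  have hev : ∀ᶠ n : ℕ in atTop,
      (∫ z, ‖fderiv ℝ f z‖ ^ p) - ∫ z in closedBall (0:E2) (n:ℝ), ‖fderiv ℝ f z‖ ^ p
        < δ ^ p := by
    have := htendsto.const_sub (∫ z, ‖fderiv ℝ f z‖ ^ p)
    simp only [sub_self] at this
    exact this.eventually_lt_const hδp
  obtain ⟨N, hN⟩ := hev.exists
  refine ⟨(N:ℝ) + 1, le_add_of_nonneg_left (Nat.cast_nonneg N), fun c s hsub => ?_⟩
  have hcompl : ∫ z in (closedBall (0:E2) (N:ℝ))ᶜ, ‖fderiv ℝ f z‖ ^ p < δ ^ p := by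
    have hadd := integral_add_compl (measurableSet_closedBall :
      MeasurableSet (closedBall (0:E2) (N:ℝ))) hG
    have := hN
    linarith [hadd.symm.le, hadd.le]
  have hsub2 : closedBall c s ⊆ (closedBall (0:E2) (N:ℝ))ᶜ := by
    refine hsub.trans (compl_subset_compl.2 ?_)
    exact closedBall_subset_closedBall (by linarith)
  have hint : ∫ z in closedBall c s, ‖fderiv ℝ f z‖ ^ p
      ≤ ∫ z in (closedBall (0:E2) (N:ℝ))ᶜ, ‖fderiv ℝ f z‖ ^ p := by
    refine setIntegral_mono_set hG.integrableOn
      (Eventually.of_forall fun z => Real.rpow_nonneg (norm_nonneg _) p)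
      (HasSubset.Subset.eventuallyLE hsub2)
  have h1 : NN f p c s ≤ (δ ^ p) ^ (1/p) := by
    rw [NN]
    refine Real.rpow_le_rpow
      (integral_nonneg fun z => Real.rpow_nonneg (norm_nonneg _) p)
      (le_of_lt (lt_of_le_of_lt hint hcompl)) (by positivity)
  rwa [← Real.rpow_mul hδ.le, mul_one_div_cancel (by linarith : p ≠ 0),
    Real.rpow_one] at h1

noncomputable def qq (p : ℝ) : ℝ := (5/4:ℝ) ^ (1 - 2/p)

noncomputable def QQ (p : ℝ) : ℝ := qq p / (qq p - 1)

lemma qq_gt_one (hp : 2 < p) : 1 < qq p := by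
  have h := Real.rpow_lt_rpow_of_exponent_lt (x := (5/4:ℝ)) (by norm_num)
    (show (0:ℝ) < 1 - 2/p from alpha_pos hp)
  rw [Real.rpow_zero] at h
  rw [qq]
  exact h

lemma QQ_ge_one (hp : 2 < p) : 1 ≤ QQ p := by
  have h := qq_gt_one hp
  rw [QQ, le_div_iff₀ (by linarith)]
  linarith

lemma QQ_identity (hp : 2 < p) : QQ p / qq p + 1 = QQ p := by
  have h := qq_gt_one hp
  have h0 : qq p ≠ 0 := by linarith
  have h1 : qq p - 1 ≠ 0 := by linarith
  rw [QQ]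
  field_simp
  ring

set_option maxHeartbeats 2000000 in
/-- the chain estimate -/
lemma chain (hp : 2 < p) (hf : ContDiff ℝ (⊤ : ℕ∞) f)
    (hgrad : MemLp (fun x => fderiv ℝ f x) (ENNReal.ofReal p) volume)
    {δ S M : ℝ} (hδ : 0 < δ) (hS : 1 ≤ S)
    (htail : ∀ (c : E2) (s : ℝ),
      closedBall c s ⊆ (closedBall (0:E2) S)ᶜ → NN f p c s ≤ δ)
    (hM : ∀ z : E2, ‖z‖ ≤ 3*S → |f z| ≤ M) :
    ∀ x : E2, 3*S ≤ ‖x‖ →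
      |f x| ≤ M + CP p * δ * QQ p * ‖x‖ ^ (1 - 2/p) := by
  have hα0 := alpha_pos hp
  have hq := qq_gt_one hp
  have hQ1 := QQ_ge_one hp
  have hCP := CP_pos hp
  have hS0 : (0:ℝ) < S := by linarith
  set α := 1 - 2/p with hα
  set sk : ℕ → ℝ := fun k => 3*S*(5/4:ℝ)^k with hsk
  have hsk0 : ∀ k, 0 < sk k := fun k => by
    rw [hsk]
    have := pow_pos (by norm_num : (0:ℝ) < 5/4) k
    nlinarith
  have hskS : ∀ k, 3*S ≤ sk k := by
    intro k
    rw [hsk]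
    have : (1:ℝ) ≤ (5/4:ℝ)^k := one_le_pow₀ (by norm_num)
    nlinarith
  have hsksucc : ∀ k, sk (k+1) = sk k * (5/4) := by
    intro k; rw [hsk]; ring
  have hskα : ∀ k, (sk (k+1)) ^ α = (sk k) ^ α * qq p := by
    intro k
    rw [hsksucc k, Real.mul_rpow (hsk0 k).le (by norm_num), qq]
  -- the key hop estimate
  have hop : ∀ (a x : E2) (k : ℕ), ‖a‖ = sk (k+1) → a = (sk (k+1) / ‖x‖) • x →
      sk (k+1) < ‖x‖ → ‖x‖ ≤ sk (k+2) →
      |f x - f a| ≤ CP p * δ * (sk (k+1)) ^ α := by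
    intro a x k ha hadef hlt hle
    have hx0 : 0 < ‖x‖ := lt_trans (hsk0 _) hlt
    set d := ‖x‖ - sk (k+1) with hd
    have hd0 : 0 < d := by rw [hd]; linarith
    have hdle : d ≤ sk (k+1) / 4 := by
      rw [hd]
      have := hsksucc (k+1)
      have h2 := hsksucc k
      nlinarith [hsk0 k, hsk0 (k+1)]
    have hdist : dist x a = d := by
      rw [hadef, dist_eq_norm]
      have : x - (sk (k+1) / ‖x‖) • x = ((‖x‖ - sk (k+1))/ ‖x‖) • x := by
        rw [sub_div, div_self hx0.ne']
        rw [sub_smul, one_smul]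
      rw [this, norm_smul, Real.norm_eq_abs, abs_of_pos (div_pos (by linarith) hx0)]
      rw [hd]
      field_simp
    have hball : closedBall x (2*d) ⊆ (closedBall (0:E2) S)ᶜ := by
      intro z hz
      simp only [mem_closedBall] at hz
      simp only [mem_compl_iff, mem_closedBall, dist_zero_right, not_le]
      have h1 : ‖x‖ - ‖z‖ ≤ dist z x := by
        rw [dist_comm, dist_eq_norm]
        have := norm_sub_norm_le x z
        rwa [← dist_eq_norm, dist_eq_norm] at this
      have h2 : ‖z‖ ≥ ‖x‖ - 2*d := by linarith
      have h3 : ‖x‖ = sk (k+1) + d := by rw [hd]; ring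
      have h4 := hskS (k+1)
      nlinarith
    have hNN := htail x (2*d) hball
    have hpair := pair_est hp hf hgrad x a hd0 (by rw [hdist])
    refine le_trans hpair ?_
    have hdα : d ^ α ≤ (sk (k+1)) ^ α := by
      refine Real.rpow_le_rpow hd0.le ?_ hα0.le
      have := hsk0 (k+1)
      linarith
    have hNN2 : NN f p x (2*d) ≤ δ := hNN
    have h5 := NN_nonneg f p x (2*d)
    have h6 := Real.rpow_nonneg hd0.le α
    have h7 := Real.rpow_nonneg (hsk0 (k+1)).le α
    have hprod := mul_le_mul hNN2 hdα h6 hδ.le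
    nlinarith [mul_le_mul_of_nonneg_left hprod hCP.le]
  -- induction
  have main : ∀ k : ℕ, ∀ x : E2, sk 0 ≤ ‖x‖ → ‖x‖ ≤ sk (k+1) →
      |f x| ≤ M + CP p * δ * QQ p * (sk k) ^ α := by
    intro k
    induction k with
    | zero =>
      intro x h1 h2
      have hx0 : 0 < ‖x‖ := lt_of_lt_of_le (hsk0 0) h1
      by_cases hcase : ‖x‖ = sk 0
      · have hMx := hM x (by rw [hcase, hsk]; norm_num)
        have h7 := Real.rpow_nonneg (hsk0 0).le α
        have hnn : 0 ≤ CP p * δ * QQ p * (sk 0) ^ α :=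
          mul_nonneg (mul_nonneg (mul_nonneg hCP.le hδ.le) (by linarith)) h7
        linarith
      · -- hop from the sphere of radius sk 0 = 3S
        set a := ((sk 0) / ‖x‖) • x with hadef
        have hlt : sk 0 < ‖x‖ := lt_of_le_of_ne h1 (Ne.symm hcase)
        have ha : ‖a‖ = sk 0 := by
          rw [hadef, norm_smul, Real.norm_eq_abs, abs_of_pos (div_pos (hsk0 0) hx0)]
          field_simp
        -- redo hop with k replaced: use hop with indices shifted
        set d := ‖x‖ - sk 0 with hd
        have hd0 : 0 < d := by rw [hd]; linarith
        have hdle : d ≤ sk 0 / 4 := by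
          rw [hd]
          have : sk 1 = sk 0 * (5 / 4) := hsksucc 0
          have h2' : ‖x‖ ≤ sk 1 := h2
          nlinarith [hsk0 0]
        have hdist : dist x a = d := by
          rw [hadef, dist_eq_norm]
          have hrw : x - ((sk 0) / ‖x‖) • x = ((‖x‖ - sk 0)/ ‖x‖) • x := by
            rw [sub_div, div_self hx0.ne']
            rw [sub_smul, one_smul]
          rw [hrw, norm_smul, Real.norm_eq_abs, abs_of_pos (div_pos (by linarith) hx0)]
          rw [hd]
          field_simp
        have hball : closedBall x (2*d) ⊆ (closedBall (0:E2) S)ᶜ := by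
          intro z hz
          simp only [mem_closedBall] at hz
          simp only [mem_compl_iff, mem_closedBall, dist_zero_right, not_le]
          have h1' : ‖x‖ - ‖z‖ ≤ dist z x := by
            rw [dist_comm, dist_eq_norm]
            have := norm_sub_norm_le x z
            rwa [← dist_eq_norm, dist_eq_norm] at this
          have h3 : ‖x‖ = sk 0 + d := by rw [hd]; ring
          have h4 := hskS 0
          nlinarith
        have hNN := htail x (2*d) hball
        have hpair := pair_est hp hf hgrad x a hd0 (by rw [hdist])
        have hfa : |f a| ≤ M := hM a (by rw [ha, hsk]; norm_num)
        have hdα : d ^ α ≤ (sk 0) ^ α := by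
          refine Real.rpow_le_rpow hd0.le ?_ hα0.le
          have := hsk0 0
          linarith
        have h5 := NN_nonneg f p x (2*d)
        have h6 := Real.rpow_nonneg hd0.le α
        have h7 := Real.rpow_nonneg (hsk0 0).le α
        have habs : |f x| ≤ |f x - f a| + |f a| := by
          have := abs_add_le (f x - f a) (f a)
          simpa using this
        have hprod := mul_le_mul hNN hdα h6 hδ.le
        have hQnn : (0:ℝ) ≤ QQ p := by linarith
        have hfin := mul_le_mul_of_nonneg_left hprod hCP.le
        have hQbig : CP p * δ * (sk 0) ^ α ≤ CP p * δ * QQ p * (sk 0) ^ α := by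
          have hnn : 0 ≤ CP p * δ * (sk 0) ^ α :=
            mul_nonneg (mul_nonneg hCP.le hδ.le) h7
          nlinarith
        nlinarith
    | succ k ih =>
      intro x h1 h2
      by_cases hcase : ‖x‖ ≤ sk (k+1)
      · refine le_trans (ih x h1 hcase) ?_
        have hmono : (sk k) ^ α ≤ (sk (k+1)) ^ α := by
          refine Real.rpow_le_rpow (hsk0 k).le ?_ hα0.le
          have := hsksucc k
          nlinarith [hsk0 k]
        have hδCP : 0 ≤ CP p * δ * QQ p :=
          mul_nonneg (mul_nonneg hCP.le hδ.le) (by linarith)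
        nlinarith
      · push_neg at hcase
        have hx0 : 0 < ‖x‖ := lt_trans (hsk0 _) hcase
        set a := ((sk (k+1)) / ‖x‖) • x with hadef
        have ha : ‖a‖ = sk (k+1) := by
          rw [hadef, norm_smul, Real.norm_eq_abs, abs_of_pos (div_pos (hsk0 (k+1)) hx0)]
          field_simp
        have hfa : |f a| ≤ M + CP p * δ * QQ p * (sk k) ^ α := by
          refine ih a ?_ ?_
          · rw [ha]
            have h3 := hskS (k+1)
            have h4 := hskS 0
            rw [hsk]
            rw [hsk] at h3
            nlinarith [hsk0 0]
          · rw [ha]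
        have hhop := hop a x k ha hadef hcase h2
        have habs : |f x| ≤ |f x - f a| + |f a| := by
          have := abs_add_le (f x - f a) (f a)
          simpa using this
        have hQid := QQ_identity hp
        have hident : QQ p * (sk k) ^ α + (sk (k+1)) ^ α = QQ p * (sk (k+1)) ^ α := by
          have h8 := hskα k
          have h9 : (sk k) ^ α = (sk (k+1)) ^ α / qq p := by
            rw [h8]
            field_simp
          rw [h9]
          have h10 := Real.rpow_nonneg (hsk0 (k+1)).le α
          have h11 : QQ p * ((sk (k+1)) ^ α / qq p) = (QQ p / qq p) * (sk (k+1)) ^ α := by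
            ring
          rw [h11]
          nlinarith [hQid]
        have hδCP : 0 ≤ CP p * δ := mul_nonneg hCP.le hδ.le
        nlinarith [hhop, hfa, habs]
  -- conclude: find the right k
  intro x hx
  have hx0 : 0 < ‖x‖ := by nlinarith
  obtain ⟨n, hn⟩ := pow_unbounded_of_one_lt (‖x‖ / (3*S)) (by norm_num : (1:ℝ) < 5/4)
  have hex : ∃ k : ℕ, ‖x‖ ≤ sk (k+1) := by
    refine ⟨n, ?_⟩
    rw [hsk]
    have h1 : ‖x‖ < 3*S*(5/4)^n := by
      rw [div_lt_iff₀ (by linarith : (0:ℝ) < 3*S)] at hn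
      nlinarith
    have h2 : (3:ℝ)*S*(5/4)^n ≤ 3*S*(5/4)^(n+1) := by
      have : ((5:ℝ)/4)^(n+1) = (5/4)^n * (5/4) := by ring
      nlinarith [pow_pos (by norm_num : (0:ℝ) < 5/4) n]
    linarith
  classical
  obtain ⟨k, hspec, hmin⟩ : ∃ k, ‖x‖ ≤ sk (k+1) ∧ (k = 0 ∨ sk k < ‖x‖) := by
    refine ⟨Nat.find hex, Nat.find_spec hex, ?_⟩
    rcases Nat.eq_zero_or_pos (Nat.find hex) with h0 | hpos
    · exact Or.inl h0
    · right
      obtain ⟨k', hk'⟩ := Nat.exists_eq_succ_of_ne_zero hpos.ne'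
      have hlt := Nat.find_min hex (m := k') (by omega)
      push_neg at hlt
      rw [hk']
      exact hlt
  have hlow : sk k ≤ ‖x‖ := by
    rcases hmin with h0 | hlt
    · rw [h0, hsk]
      simpa using hx
    · exact hlt.le
  have hbound := main k x (by rw [hsk]; simpa using hx) hspec
  refine le_trans hbound ?_
  have hmono : (sk k) ^ α ≤ ‖x‖ ^ α := Real.rpow_le_rpow (hsk0 k).le hlow hα0.le
  have hδCP : 0 ≤ CP p * δ * QQ p :=
    mul_nonneg (mul_nonneg hCP.le hδ.le) (by linarith)
  nlinarith

set_option maxHeartbeats 1000000 in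
lemma growth (hp : 2 < p) (hf : ContDiff ℝ (⊤ : ℕ∞) f)
    (hgrad : MemLp (fun x => fderiv ℝ f x) (ENNReal.ofReal p) volume) :
    ∀ ε : ℝ, 0 < ε → ∃ R : ℝ, ∀ x : E2, R < ‖x‖ → |f x| / ‖x‖ ^ (1 - 2/p) < ε := by
  intro ε hε
  have hα0 := alpha_pos hp
  have hCP := CP_pos hp
  have hQ1 := QQ_ge_one hp
  have hQ0 : (0:ℝ) < QQ p := by linarith
  have hCQ : 0 < CP p * QQ p := mul_pos hCP hQ0
  set δ := ε / (2 * (CP p * QQ p + 1)) with hδdef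
  have hδ : 0 < δ := by rw [hδdef]; exact div_pos hε (by nlinarith)
  obtain ⟨S, hS, htail⟩ := tail_small hp hgrad hδ
  obtain ⟨M, hMb⟩ := (isCompact_closedBall (0:E2) (3*S)).exists_bound_of_continuousOn
    hf.continuous.continuousOn
  have hM : ∀ z : E2, ‖z‖ ≤ 3*S → |f z| ≤ M := by
    intro z hz
    have := hMb z (by simpa [mem_closedBall, dist_zero_right] using hz)
    rwa [Real.norm_eq_abs] at this
  have hM0 : 0 ≤ M := le_trans (abs_nonneg (f 0))
    (hM 0 (by rw [norm_zero]; nlinarith))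
  have hchain := chain hp hf hgrad hδ hS htail hM
  set B := 2 * (M + 1) / ε + 1 with hBdef
  have hB1 : 1 ≤ B := by
    rw [hBdef]
    have : (0:ℝ) ≤ 2*(M+1)/ε := by positivity
    linarith
  set R := max (3*S) (B ^ (1/(1 - 2/p))) with hRdef
  refine ⟨R, fun x hx => ?_⟩
  have hx3S : 3*S ≤ ‖x‖ := le_of_lt (lt_of_le_of_lt (le_max_left _ _) hx)
  have hxB : B ^ (1/(1-2/p)) < ‖x‖ := lt_of_le_of_lt (le_max_right _ _) hx
  have hBpos : 0 < B ^ (1/(1-2/p)) := Real.rpow_pos_of_pos (by linarith) _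
  have hx0 : 0 < ‖x‖ := lt_trans hBpos hxB
  have hxα : B < ‖x‖ ^ (1-2/p) := by
    have h1 : (B ^ (1/(1-2/p))) ^ (1-2/p) < ‖x‖ ^ (1-2/p) :=
      Real.rpow_lt_rpow hBpos.le hxB hα0
    rwa [← Real.rpow_mul (by linarith : (0:ℝ) ≤ B), one_div_mul_cancel hα0.ne',
      Real.rpow_one] at h1
  have hxαpos : 0 < ‖x‖ ^ (1-2/p) := Real.rpow_pos_of_pos hx0 _
  have hfx := hchain x hx3S
  have h2 : CP p * δ * QQ p ≤ ε/2 := by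
    rw [hδdef]
    have hrw : CP p * (ε / (2 * (CP p * QQ p + 1))) * QQ p
        = ε * (CP p * QQ p) / (2*(CP p * QQ p + 1)) := by ring
    rw [hrw, div_le_div_iff₀ (by nlinarith) (by norm_num : (0:ℝ) < 2)]
    nlinarith
  have h3 : M < ε/2 * ‖x‖ ^ (1-2/p) := by
    have hB2 : 2*(M+1)/ε < ‖x‖^(1-2/p) := by
      rw [hBdef] at hxα; linarith
    rw [div_lt_iff₀ hε] at hB2
    nlinarith
  rw [div_lt_iff₀ hxαpos]
  have h4 : CP p * δ * QQ p * ‖x‖^(1-2/p) ≤ ε/2 * ‖x‖^(1-2/p) :=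
    mul_le_mul_of_nonneg_right h2 hxαpos.le
  nlinarith

end D

end GaldiAux
theorem galdi_growth_lemma (p : ℝ) (hp : 2 < p)
    (f : EuclideanSpace ℝ (Fin 2) → ℝ) (hf : ContDiff ℝ (⊤ : ℕ∞) f)
    (hgrad : MemLp (fun x => fderiv ℝ f x) (ENNReal.ofReal p) volume) :
    (∀ ε : ℝ, 0 < ε → ∃ R : ℝ, ∀ x : EuclideanSpace ℝ (Fin 2),
        R < ‖x‖ → |f x| / ‖x‖ ^ ((p - 2) / p) < ε) ∧
    (∃ R : ℝ, 0 < R ∧ ∀ x : EuclideanSpace ℝ (Fin 2),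
        R < ‖x‖ → |f x| ≤ (1 + ‖x‖) ^ ((p - 2) / p)) := by
  have hp0 : p ≠ 0 := by linarith
  have hexp : (p-2)/p = 1 - 2/p := by
    rw [sub_div, div_self hp0]
  have hkey := GaldiAux.growth hp hf hgrad
  constructor
  · intro ε hε
    obtain ⟨R, hR⟩ := hkey ε hε
    refine ⟨R, fun x hx => ?_⟩
    rw [hexp]
    exact hR x hx
  · obtain ⟨R₀, hR₀⟩ := hkey 1 one_pos
    refine ⟨max R₀ 1, lt_of_lt_of_le one_pos (le_max_right _ _), fun x hx => ?_⟩
    have hx1 : 1 < ‖x‖ := lt_of_le_of_lt (le_max_right _ _) hx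
    have hxR : R₀ < ‖x‖ := lt_of_le_of_lt (le_max_left _ _) hx
    have h := hR₀ x hxR
    have hα0 := GaldiAux.alpha_pos hp
    have hpos : 0 < ‖x‖ ^ (1 - 2/p) := Real.rpow_pos_of_pos (by linarith) _
    rw [hexp]
    rw [div_lt_one hpos] at h
    have hle : ‖x‖ ^ (1-2/p) ≤ (1+‖x‖) ^ (1-2/p) :=
      Real.rpow_le_rpow (by linarith) (by linarith) hα0.le
    linarith
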